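/- arXiv:2505.20497 — 4 statements merged into one kernel-verified Lean document; each statement's English description precedes it below -/
import Mathlib

section
/- Let H be a distributive Ω-expanded group and define τ(S) = ⟨S ∪ ⋃_{ω∈Ω} ω(S^{ar ω})⟩ for subsets S ⊆ H, where ⟨·⟩ denotes the additive subgroup generated. Then τ(S) = τ(⟨S⟩) for every subset S ⊆ H. -/
/-- Distributivity of the extra operations of an Ω-expanded group over `+`. -/
def IsDistribExpansion {Ω : Type*} (ar : Ω → ℕ) {H : Type*} [AddGroup H]
    (op : ∀ ω : Ω, (Fin (ar ω) → H) → H) : Prop :=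
  ∀ (ω : Ω) (i : Fin (ar ω)) (h : Fin (ar ω) → H) (a b : H),
    op ω (Function.update h i (a + b)) =
      op ω (Function.update h i a) + op ω (Function.update h i b)

/-- `τ(S) = ⟨S ∪ ⋃_{ω∈Ω} ω(S^{ar ω})⟩`, the additive subgroup generated. -/
def tauSet {Ω : Type*} (ar : Ω → ℕ) {H : Type*} [AddGroup H]
    (op : ∀ ω : Ω, (Fin (ar ω) → H) → H) (S : Set H) : Set H :=
  ↑(AddSubgroup.closure (S ∪ ⋃ ω : Ω, op ω '' {h | ∀ i, h i ∈ S}))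

/-!
Each operation is additive in every argument, so fixing all arguments but one gives an additive
group homomorphism; its preimage of `τ(S)` is a subgroup, and hence contains `⟨S⟩` as soon as it
contains `S`. Enlarging the arguments from `S` to `⟨S⟩` one coordinate at a time shows that
`ω(⟨S⟩^{ar ω}) ⊆ τ(S)`, which gives `τ(⟨S⟩) ⊆ τ(S)`; the other inclusion is monotonicity.
-/

open Function

section MultiAdditive

variable {ι H H' : Type*} [DecidableEq ι] [AddGroup H] [AddGroup H']

def IsAdditiveInEachArg (f : (ι → H) → H') : Prop :=
  ∀ (i : ι) (h : ι → H) (a b : H), f (update h i (a + b)) = f (update h i a) + f (update h i b)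

namespace IsAdditiveInEachArg

variable {f : (ι → H) → H'}

def slotHom (hf : IsAdditiveInEachArg f) (h : ι → H) (i : ι) : H →+ H' :=
  AddMonoidHom.mk' (fun x => f (update h i x)) (hf i h)

theorem update_mem_of_mem_closure (hf : IsAdditiveInEachArg f) {S : Set H} {K : AddSubgroup H'}
    {h : ι → H} {i : ι} (hS : ∀ y ∈ S, f (update h i y) ∈ K) {x : H}
    (hx : x ∈ AddSubgroup.closure S) :
    f (update h i x) ∈ K :=
  (AddSubgroup.closure_le (K.comap (hf.slotHom h i))).2 hS hx

theorem mem_of_forall_mem_closure [Finite ι] (hf : IsAdditiveInEachArg f) {S : Set H}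
    {K : AddSubgroup H'} (hS : ∀ h : ι → H, (∀ i, h i ∈ S) → f h ∈ K) {h : ι → H}
    (hh : ∀ i, h i ∈ AddSubgroup.closure S) : f h ∈ K := by
  cases nonempty_fintype ι
  suffices ∀ t : Finset ι, ∀ h : ι → H, (∀ i ∈ t, h i ∈ AddSubgroup.closure S) →
      (∀ i ∉ t, h i ∈ S) → f h ∈ K from
    this Finset.univ h (fun i _ => hh i) (fun i hi => absurd (Finset.mem_univ i) hi)
  intro t
  induction t using Finset.induction_on with
  | empty => exact fun h _ hS' => hS h fun i => hS' i (Finset.notMem_empty i)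
  | insert j t hj ih =>
    intro h hcl hS'
    rw [← update_eq_self j h]
    refine hf.update_mem_of_mem_closure (fun y hy => ih _ ?_ ?_) (hcl j (t.mem_insert_self j))
    · intro i hi
      rw [update_of_ne (ne_of_mem_of_not_mem hi hj)]
      exact hcl i (Finset.mem_insert_of_mem hi)
    · intro i hi
      rcases eq_or_ne i j with rfl | hij
      · simpa using hy
      · rw [update_of_ne hij]
        exact hS' i (by simp [hij, hi])

end IsAdditiveInEachArg

end MultiAdditive

theorem tauSet_mono {Ω : Type*} (ar : Ω → ℕ) {H : Type*} [AddGroup H]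
    (op : ∀ ω : Ω, (Fin (ar ω) → H) → H) {S T : Set H} (hST : S ⊆ T) :
    tauSet ar op S ⊆ tauSet ar op T :=
  AddSubgroup.closure_mono <| Set.union_subset_union hST <|
    Set.iUnion_mono fun _ => Set.image_mono fun _ hh i => hST (hh i)

/-- In a distributive Ω-expanded group, `τ(S) = τ(⟨S⟩)` for every `S ⊆ H`. -/
theorem stmt_4 {Ω : Type*} (ar : Ω → ℕ) {H : Type*} [AddGroup H]
    (op : ∀ ω : Ω, (Fin (ar ω) → H) → H) (hdis : IsDistribExpansion ar op)
    (S : Set H) :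
    tauSet ar op S = tauSet ar op ↑(AddSubgroup.closure S) := by
  refine (tauSet_mono ar op AddSubgroup.subset_closure).antisymm ?_
  refine (AddSubgroup.closure_le _).2 (Set.union_subset ?_ (Set.iUnion_subset fun ω => ?_))
  · exact AddSubgroup.closure_mono Set.subset_union_left
  · rintro _ ⟨h, hh, rfl⟩
    refine IsAdditiveInEachArg.mem_of_forall_mem_closure (hdis ω) (fun g hg => ?_) hh
    exact AddSubgroup.subset_closure (.inr (Set.mem_iUnion_of_mem ω ⟨g, hg, rfl⟩))
end

section
/- Let H be a distributive Ω-expanded group and g = (g₁,...,g_m) a tuple of elements generating the additive group of H as a monoid under + (equivalently, generating (H,+) since H is finite or by assumption every element is a sum of the gᵢ). Then every additive subgroup A of H that is closed under the unary operations χᵢ(h) = -gᵢ + h + gᵢ and h ↦ ω(g_{d₁},...,g_{d_{j-1}}, h, g_{d_{j+1}},...,g_{d_{ar ω}}) (for all nonnullary ω, positions j, and indices d₁,...,d_{ar ω} ∈ {1,...,m}) is an ideal of H. -/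
/-- An ideal of a distributive Ω-expanded group: a normal subgroup `A` of the additive
group with `ω(H,...,H,A,H,...,H) ⊆ A` for every nonnullary `ω` and every position. -/
def IsIdealSet {Ω : Type*} (ar : Ω → ℕ) {H : Type*} [AddGroup H]
    (op : ∀ ω : Ω, (Fin (ar ω) → H) → H) (A : Set H) : Prop :=
  ((0 : H) ∈ A ∧ (∀ a ∈ A, ∀ b ∈ A, a + b ∈ A) ∧ (∀ a ∈ A, -a ∈ A) ∧
      ∀ h : H, ∀ a ∈ A, -h + a + h ∈ A) ∧
    ∀ (ω : Ω) (i : Fin (ar ω)) (h : Fin (ar ω) → H), ∀ a ∈ A,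
      op ω (Function.update h i a) ∈ A

/-! Both closure properties of an ideal are checked on generators only: conjugation by a sum
is an iterated conjugation, and by distributivity the set of arguments `h` with
`ω(h₁, …, a, …, h_n) ∈ A` is closed under `+` in each coordinate, so the arguments can be
replaced by generators one coordinate at a time. -/

open Function

theorem AddSubmonoid.closure_induction_update {ι M : Type*} [DecidableEq ι] [AddMonoid M]
    {s : Set M} (hs : AddSubmonoid.closure s = ⊤) {P : (ι → M) → Prop} (J : Finset ι)
    (zero : ∀ j ∈ J, ∀ h, P (update h j 0))
    (add : ∀ j ∈ J, ∀ h x y, P (update h j x) → P (update h j y) → P (update h j (x + y)))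
    (base : ∀ h, (∀ j ∈ J, h j ∈ s) → P h) (h : ι → M) : P h := by
  induction J using Finset.induction_on generalizing h with
  | empty => exact base h (by simp)
  | insert j T _ ih =>
    refine ih (fun k hk ↦ zero k (Finset.mem_insert_of_mem hk))
      (fun k hk ↦ add k (Finset.mem_insert_of_mem hk)) (fun h' hT ↦ ?_) h
    have hfill : ∀ x, P (update h' j x) := fun x ↦ by
      induction (hs ▸ AddSubmonoid.mem_top x : x ∈ AddSubmonoid.closure s)
        using AddSubmonoid.closure_induction with
      | mem x hx =>
        refine base _ fun k hk ↦ ?_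
        rcases eq_or_ne k j with rfl | hkj
        · simpa using hx
        · rw [update_of_ne hkj]
          exact hT k ((Finset.mem_insert.mp hk).resolve_left hkj)
      | zero => exact zero j (Finset.mem_insert_self j T) h'
      | add x y _ _ hx hy => exact add j (Finset.mem_insert_self j T) h' x y hx hy
    simpa using hfill (h' j)

theorem conj_mem_of_closure_eq_top {H : Type*} [AddGroup H] {s : Set H}
    (hs : AddSubmonoid.closure s = ⊤) {A : Set H}
    (hs_conj : ∀ x ∈ s, ∀ a ∈ A, -x + a + x ∈ A) (h : H) :
    ∀ a ∈ A, -h + a + h ∈ A := by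
  induction (hs ▸ AddSubmonoid.mem_top h : h ∈ AddSubmonoid.closure s)
    using AddSubmonoid.closure_induction with
  | mem x hx => exact hs_conj x hx
  | zero => simp
  | add x y _ _ hx hy =>
    intro a ha
    have hconj : -(x + y) + a + (x + y) = -y + (-x + a + x) + y := by
      simp only [neg_add_rev, add_assoc]
    exact hconj ▸ hy _ (hx a ha)

namespace IsDistribExpansion

variable {Ω : Type*} {ar : Ω → ℕ} {H : Type*} [AddGroup H]
  {op : ∀ ω : Ω, (Fin (ar ω) → H) → H}

theorem op_update_zero (hdis : IsDistribExpansion ar op) (ω : Ω) (i : Fin (ar ω))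
    (h : Fin (ar ω) → H) : op ω (update h i 0) = 0 := by
  simpa using hdis ω i h 0 0

theorem op_update_mem {m : ℕ} {g : Fin m → H} {A : Set H} (hdis : IsDistribExpansion ar op)
    (hg : AddSubmonoid.closure (Set.range g) = ⊤) (hzero : (0 : H) ∈ A)
    (hadd : ∀ a ∈ A, ∀ b ∈ A, a + b ∈ A)
    (hpsi : ∀ (ω : Ω) (j : Fin (ar ω)) (d : Fin (ar ω) → Fin m), ∀ a ∈ A,
      op ω (update (fun t ↦ g (d t)) j a) ∈ A)
    (ω : Ω) (i : Fin (ar ω)) (h : Fin (ar ω) → H) {a : H} (ha : a ∈ A) :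
    op ω (update h i a) ∈ A := by
  rcases isEmpty_or_nonempty (Fin m) with _ | ⟨⟨k⟩⟩
  · have hbot : AddSubmonoid.closure (Set.range g) = ⊥ := by simp [Set.range_eq_empty]
    have : Subsingleton H :=
      AddSubmonoid.subsingleton_iff.mp (subsingleton_of_bot_eq_top (hbot ▸ hg))
    exact Subsingleton.elim 0 (op ω (update h i a)) ▸ hzero
  have hswap (j : Fin (ar ω)) (hj : j ≠ i) (h : Fin (ar ω) → H) (x : H) :
      update (update h j x) i a = update (update h i a) j x :=
    update_comm hj x a h
  refine AddSubmonoid.closure_induction_update (P := fun h ↦ op ω (update h i a) ∈ A) hg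
    (Finset.univ.erase i)
    (fun j hj h ↦ ?_) (fun j hj h x y hx hy ↦ ?_) (fun h hgh ↦ ?_) h
  · rw [hswap j (Finset.ne_of_mem_erase hj), hdis.op_update_zero]
    exact hzero
  · rw [hswap j (Finset.ne_of_mem_erase hj)] at hx hy ⊢
    rw [hdis]
    exact hadd _ hx _ hy
  · have hex : ∀ j, ∃ t, j ≠ i → h j = g t := fun j ↦ by
      by_cases hj : j = i
      · exact ⟨k, fun hji ↦ absurd hj hji⟩
      · obtain ⟨t, ht⟩ := hgh j (Finset.mem_erase.mpr ⟨hj, Finset.mem_univ j⟩)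
        exact ⟨t, fun _ ↦ ht.symm⟩
    choose d hd using hex
    have hgd : update h i a = update (fun t ↦ g (d t)) i a := by
      ext j
      rcases eq_or_ne j i with rfl | hj
      · simp
      · simp [update_of_ne hj, hd j hj]
    exact hgd ▸ hpsi ω i d a ha

end IsDistribExpansion

/-- Let `H` be a distributive Ω-expanded group in which every element is a sum of the
`gᵢ`.  Then every additive subgroup `A` of `H` that is closed under the conjugations
`χᵢ(h) = -gᵢ + h + gᵢ` and under the unary operations
`h ↦ ω(g_{d₁},...,h,...,g_{d_{ar ω}})` (with `h` at position `j`) is an ideal of `H`. -/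
theorem stmt_12 {Ω : Type*} (ar : Ω → ℕ) {H : Type*} [AddGroup H]
    (op : ∀ ω : Ω, (Fin (ar ω) → H) → H) (hdis : IsDistribExpansion ar op)
    (m : ℕ) (g : Fin m → H)
    (hgen : ∀ h : H, h ∈ AddSubmonoid.closure (Set.range g))
    (A : Set H)
    (hsub : (0 : H) ∈ A ∧ (∀ a ∈ A, ∀ b ∈ A, a + b ∈ A) ∧ (∀ a ∈ A, -a ∈ A))
    (hchi : ∀ i : Fin m, ∀ a ∈ A, -g i + a + g i ∈ A)
    (hpsi : ∀ (ω : Ω) (j : Fin (ar ω)) (d : Fin (ar ω) → Fin m), ∀ a ∈ A,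
      op ω (Function.update (fun t => g (d t)) j a) ∈ A) :
    IsIdealSet ar op A := by
  obtain ⟨hzero, hadd, hneg⟩ := hsub
  have hg : AddSubmonoid.closure (Set.range g) = ⊤ := (AddSubmonoid.eq_top_iff' _).mpr hgen
  have hnormal := conj_mem_of_closure_eq_top hg (Set.forall_mem_range.mpr hchi)
  exact ⟨⟨hzero, hadd, hneg, hnormal⟩,
    fun ω i h _ ha ↦ hdis.op_update_mem hg hzero hadd hpsi ω i h ha⟩
end

section
/- Let G be a finite group with generating set {s₁,...,s_m}, and let r = s₁^{b₁}···s_m^{b_m} be a random subproduct, where b₁,...,b_m are independent uniform bits. Then for any proper subgroup K < G, the probability that r ∉ K is at least 1/2. -/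
/-- The random subproduct `s₁^{b₁} ⋯ s_m^{b_m}` of the tuple `s` determined by the
bits `b`. -/
def subProd {G : Type*} [Group G] {m : ℕ} (s : Fin m → G) (b : Fin m → Bool) : G :=
  (List.ofFn fun i : Fin m => if b i then s i else 1).prod

section aux
variable {G : Type*} [Group G] {m : ℕ}

lemma subProd_split (s : Fin m → G) (b : Fin m → Bool) (j : Fin m) :
    subProd s b =
      ((List.ofFn fun i : Fin m => if b i then s i else 1).take j).prod *
      ((if b j then s j else 1) *
        ((List.ofFn fun i : Fin m => if b i then s i else 1).drop (j + 1)).prod) := by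
  set L := List.ofFn fun i : Fin m => if b i then s i else 1 with hL
  have hlen : L.length = m := by simp [hL]
  have hj : (j : ℕ) < L.length := by rw [hlen]; exact j.2
  have h1 : L.drop j = L[(j : ℕ)] :: L.drop (j + 1) := List.drop_eq_getElem_cons hj
  have h2 : L[(j : ℕ)] = if b j then s j else 1 := by simp [hL]
  calc subProd s b = (L.take j).prod * (L.drop j).prod := (List.prod_take_mul_prod_drop L j).symm
    _ = _ := by rw [h1, h2, List.prod_cons]

lemma take_update (s : Fin m → G) (b : Fin m → Bool) (j : Fin m) (x : Bool) :
    (List.ofFn fun i : Fin m => if Function.update b j x i then s i else 1).take j =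
    (List.ofFn fun i : Fin m => if b i then s i else 1).take j := by
  apply List.ext_getElem
  · simp
  · intro n h1 h2
    simp only [List.getElem_take, List.getElem_ofFn]
    have hn : n < (j : ℕ) := by simpa using h1
    have : Function.update b j x ⟨n, by omega⟩ = b ⟨n, by omega⟩ := by
      apply Function.update_of_ne
      exact fun h => by simp [Fin.ext_iff] at h; omega
    rw [this]

lemma drop_update (s : Fin m → G) (b : Fin m → Bool) (j : Fin m) (x : Bool) :
    (List.ofFn fun i : Fin m => if Function.update b j x i then s i else 1).drop (j + 1) =
    (List.ofFn fun i : Fin m => if b i then s i else 1).drop (j + 1) := by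
  apply List.ext_getElem
  · simp
  · intro n h1 h2
    simp only [List.getElem_drop, List.getElem_ofFn]
    have hn : (j : ℕ) + 1 + n < m := by simp at h1; omega
    have : Function.update b j x ⟨j + 1 + n, by omega⟩ = b ⟨j + 1 + n, by omega⟩ := by
      apply Function.update_of_ne
      exact fun h => by simp [Fin.ext_iff] at h; omega
    rw [this]

/-- Key step: if `s j ∉ K` and `s i ∈ K` for all `i > j`, then the subproducts for `b`
and for `b` with bit `j` flipped cannot both lie in `K`. -/
lemma not_both (s : Fin m → G) (K : Subgroup G) (j : Fin m) (hj : s j ∉ K)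
    (htail : ∀ i : Fin m, (j : ℕ) < (i : ℕ) → s i ∈ K) (b : Fin m → Bool)
    (h1 : subProd s b ∈ K) (h2 : subProd s (Function.update b j (!b j)) ∈ K) : False := by
  set b' := Function.update b j (!b j) with hb'
  set A := ((List.ofFn fun i : Fin m => if b i then s i else 1).take j).prod with hA
  set T := ((List.ofFn fun i : Fin m => if b i then s i else 1).drop (j + 1)).prod with hT
  have hTK : T ∈ K := by
    apply Subgroup.list_prod_mem
    intro x hx
    rw [List.mem_iff_getElem] at hx
    obtain ⟨n, hn, rfl⟩ := hx
    simp only [List.getElem_drop, List.getElem_ofFn]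
    have hn' : (j : ℕ) + 1 + n < m := by simp at hn; omega
    split
    · exact htail _ (by simp; omega)
    · exact K.one_mem
  have e1 : subProd s b = A * ((if b j then s j else 1) * T) := subProd_split s b j
  have e2 : subProd s b' = A * ((if b' j then s j else 1) * T) := by
    rw [subProd_split s b' j, hb', take_update, drop_update]
  have hb'j : b' j = !b j := by simp [hb']
  -- one of the two has the `s j` factor, the other not
  have key : A * T ∈ K → A * (s j * T) ∈ K → False := by
    intro k1 k2
    have hA : A ∈ K := (K.mul_mem_cancel_right hTK).mp k1
    have : s j * T ∈ K := (K.mul_mem_cancel_left hA).mp k2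
    exact hj ((K.mul_mem_cancel_right hTK).mp this)
  cases hbj : b j with
  | true =>
      rw [hbj] at e1; rw [hb'j, hbj] at e2
      simp only [Bool.not_true] at e1 e2
      norm_num at e1 e2
      exact key (e2 ▸ h2) (e1 ▸ h1)
  | false =>
      rw [hbj] at e1; rw [hb'j, hbj] at e2
      simp only [Bool.not_false] at e1 e2
      norm_num at e1 e2
      exact key (e1 ▸ h1) (e2 ▸ h2)

end aux

/-- If `G` is a finite group generated by `s₁,...,s_m` and `K < G` is a proper
subgroup, then a uniformly random subproduct of `(s₁,...,s_m)` lies outside `K`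
with probability at least `1/2`. -/
theorem stmt_13 {G : Type*} [Group G] [Finite G] {m : ℕ} (s : Fin m → G)
    (hgen : Subgroup.closure (Set.range s) = ⊤)
    (K : Subgroup G) (hK : K ≠ ⊤) :
    (1 : ℚ) / 2 ≤ (Nat.card {b : Fin m → Bool // subProd s b ∉ K} : ℚ) / 2 ^ m := by
  classical
  -- there is a generator outside K
  have hex : ∃ i : Fin m, s i ∉ K := by
    by_contra h
    push_neg at h
    exact hK (top_le_iff.mp (hgen ▸ (Subgroup.closure_le K).mpr
      (by rintro x ⟨i, rfl⟩; exact h i)))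
  -- take the largest such index
  have hFne : (Finset.univ.filter fun i : Fin m => s i ∉ K).Nonempty :=
    ⟨hex.choose, by simp [hex.choose_spec]⟩
  set j := (Finset.univ.filter fun i : Fin m => s i ∉ K).max' hFne with hjdef
  have hj : s j ∉ K := by
    have := (Finset.univ.filter fun i : Fin m => s i ∉ K).max'_mem hFne
    simpa using this
  have htail : ∀ i : Fin m, (j : ℕ) < (i : ℕ) → s i ∈ K := by
    intro i hi
    by_contra hiK
    have : i ≤ j := Finset.le_max' _ i (by simp [hiK])
    exact absurd hi (by simpa using this)
  -- flip map is an injection from bad set into good set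
  let f : {b : Fin m → Bool // subProd s b ∈ K} → {b : Fin m → Bool // subProd s b ∉ K} :=
    fun b => ⟨Function.update b.1 j (!b.1 j),
      fun h => not_both s K j hj htail b.1 b.2 h⟩
  have hfinj : Function.Injective f := by
    rintro ⟨b1, h1⟩ ⟨b2, h2⟩ h
    have h' : Function.update b1 j (!b1 j) = Function.update b2 j (!b2 j) :=
      congrArg Subtype.val h
    ext i
    by_cases hi : i = j
    · have := congrFun h' j
      simp only [Function.update_self] at this
      rw [hi]
      exact Bool.not_inj this
    · have := congrFun h' i
      rwa [Function.update_of_ne hi, Function.update_of_ne hi] at this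
  have hle : Nat.card {b : Fin m → Bool // subProd s b ∈ K} ≤
      Nat.card {b : Fin m → Bool // subProd s b ∉ K} :=
    Nat.card_le_card_of_injective f hfinj
  have hsum : Nat.card {b : Fin m → Bool // subProd s b ∈ K} +
      Nat.card {b : Fin m → Bool // subProd s b ∉ K} = 2 ^ m := by
    rw [Nat.card_eq_fintype_card, Nat.card_eq_fintype_card]
    rw [Fintype.card_subtype_compl]
    have hle' : Fintype.card {b : Fin m → Bool // subProd s b ∈ K} ≤
        Fintype.card (Fin m → Bool) := Fintype.card_subtype_le _
    simp only [Fintype.card_fun, Fintype.card_bool, Fintype.card_fin] at *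
    omega
  set N := Nat.card {b : Fin m → Bool // subProd s b ∉ K}
  have h2 : 2 ^ m ≤ 2 * N := by omega
  rw [div_le_div_iff₀ (by norm_num) (by positivity)]
  calc (1 : ℚ) * 2 ^ m = ((2 ^ m : ℕ) : ℚ) := by push_cast; ring
    _ ≤ ((2 * N : ℕ) : ℚ) := by exact_mod_cast h2
    _ = (N : ℚ) * 2 := by push_cast; ring
end

section
/- Let G be a finite group generated by s₁,...,s_m, let K < G be a proper subgroup, and let r₁,...,r_N be independent random subproducts of (s₁,...,s_m). Then the probability that all of r₁,...,r_N lie in K is at most 2^{-N}. -/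
section aux

variable {G : Type*} [Group G] {m : ℕ}

lemma subProd_decomp (s : Fin m → G) (c : Fin m → Bool) (i₀ : Fin m) :
    subProd s c =
      ((List.ofFn fun i : Fin m => if c i then s i else 1).take i₀).prod *
        (if c i₀ then s i₀ else 1) *
        ((List.ofFn fun i : Fin m => if c i then s i else 1).drop (i₀ + 1)).prod := by
  unfold subProd
  rw [← List.prod_take_mul_prod_drop _ ((i₀ : ℕ) + 1),
    List.prod_take_succ _ _ (by simp [i₀.isLt])]
  congr 1
  congr 1
  simp

lemma toggle_key (s : Fin m → G) (K : Subgroup G) (i₀ : Fin m)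
    (hi : s i₀ ∉ K) (hmax : ∀ j, i₀ < j → s j ∈ K)
    (b : Fin m → Bool) (hb : subProd s b ∈ K) :
    subProd s (Function.update b i₀ (!b i₀)) ∉ K := by
  intro hb'
  set g : (Fin m → Bool) → Fin m → G := fun c i => if c i then s i else 1 with hg
  have htake : (List.ofFn (g (Function.update b i₀ (!b i₀)))).take i₀ =
      (List.ofFn (g b)).take i₀ := by
    apply List.ext_getElem (by simp)
    intro n h1 h2
    simp only [List.getElem_take, List.getElem_ofFn]
    have hn : n < (i₀ : ℕ) := by simpa using h1
    have : (⟨n, by omega⟩ : Fin m) ≠ i₀ := by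
      intro h; apply absurd hn; simp [← h]
    simp [hg, Function.update_of_ne this]
  have hdrop : (List.ofFn (g (Function.update b i₀ (!b i₀)))).drop ((i₀ : ℕ) + 1) =
      (List.ofFn (g b)).drop ((i₀ : ℕ) + 1) := by
    apply List.ext_getElem (by simp)
    intro n h1 h2
    rw [List.getElem_drop, List.getElem_drop]
    have hlen : (i₀ : ℕ) + 1 + n < m := by
      have := i₀.isLt; simp only [List.length_drop, List.length_ofFn] at h1; omega
    rw [List.getElem_ofFn, List.getElem_ofFn]
    have : (⟨(i₀ : ℕ) + 1 + n, hlen⟩ : Fin m) ≠ i₀ := by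
      intro h
      have : ((⟨(i₀ : ℕ) + 1 + n, hlen⟩ : Fin m) : ℕ) = (i₀ : ℕ) := by rw [h]
      simp at this; omega
    simp [hg, Function.update_of_ne this]
  have hY : ((List.ofFn (g b)).drop ((i₀ : ℕ) + 1)).prod ∈ K := by
    apply K.list_prod_mem
    intro x hx
    rw [List.mem_iff_getElem] at hx
    obtain ⟨n, hn, rfl⟩ := hx
    have hlen : (i₀ : ℕ) + 1 + n < m := by
      have := i₀.isLt; simp only [List.length_drop, List.length_ofFn] at hn; omega
    rw [List.getElem_drop, List.getElem_ofFn]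
    have : s ⟨(i₀ : ℕ) + 1 + n, hlen⟩ ∈ K := by
      apply hmax
      simp only [Fin.lt_def]
      omega
    show (if b ⟨(i₀ : ℕ) + 1 + n, hlen⟩ then s ⟨(i₀ : ℕ) + 1 + n, hlen⟩ else 1) ∈ K
    split
    · exact this
    · exact K.one_mem
  rw [subProd_decomp s _ i₀] at hb hb'
  rw [htake, hdrop] at hb'
  set X := ((List.ofFn (g b)).take (i₀ : ℕ)).prod with hX
  set Y := ((List.ofFn (g b)).drop ((i₀ : ℕ) + 1)).prod with hYdef
  have hupd : Function.update b i₀ (!b i₀) i₀ = !b i₀ := by simp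
  rw [hupd] at hb'
  apply hi
  cases hbi : b i₀ with
  | false =>
    rw [hbi] at hb hb'
    simp only [Bool.not_false, if_true, if_false, mul_one] at hb hb'
    -- hb : X * Y ∈ K, hb' : X * s i₀ * Y ∈ K
    have hX' : X ∈ K := by
      have := K.mul_mem hb (K.inv_mem hY)
      simpa [mul_assoc] using this
    have : s i₀ * Y ∈ K := by
      have := K.mul_mem (K.inv_mem hX') hb'
      simpa [mul_assoc] using this
    have := K.mul_mem this (K.inv_mem hY)
    simpa [mul_assoc] using this
  | true =>
    rw [hbi] at hb hb'
    simp only [Bool.not_true, if_true, if_false, mul_one] at hb hb'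
    have hX' : X ∈ K := by
      have := K.mul_mem hb' (K.inv_mem hY)
      simpa [mul_assoc] using this
    have : s i₀ * Y ∈ K := by
      have := K.mul_mem (K.inv_mem hX') hb
      simpa [mul_assoc] using this
    have := K.mul_mem this (K.inv_mem hY)
    simpa [mul_assoc] using this

lemma count_le (s : Fin m → G) (K : Subgroup G) (hex : ∃ i, s i ∉ K) :
    2 * Nat.card {b : Fin m → Bool // subProd s b ∈ K} ≤ 2 ^ m := by
  classical
  obtain ⟨i, hi⟩ := hex
  set F : Finset (Fin m) := Finset.univ.filter (fun i => s i ∉ K) with hF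
  have hFne : F.Nonempty := ⟨i, by simp [hF, hi]⟩
  set i₀ := F.max' hFne with hi₀
  have hi₀mem : i₀ ∈ F := F.max'_mem hFne
  have hi₀K : s i₀ ∉ K := by simpa [hF] using hi₀mem
  have hmax : ∀ j, i₀ < j → s j ∈ K := by
    intro j hj
    by_contra hjK
    exact absurd (F.le_max' j (by simp [hF, hjK])) (not_le.2 hj)
  -- injection from the K-subtype to the complement
  set f : {b : Fin m → Bool // subProd s b ∈ K} → {b : Fin m → Bool // subProd s b ∉ K} :=
    fun b => ⟨Function.update b.1 i₀ (!b.1 i₀), toggle_key s K i₀ hi₀K hmax b.1 b.2⟩ with hf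
  have hinj : Function.Injective f := by
    intro b b' h
    have h' : Function.update b.1 i₀ (!b.1 i₀) = Function.update b'.1 i₀ (!b'.1 i₀) := by
      simpa [hf] using congrArg Subtype.val h
    apply Subtype.ext
    funext j
    by_cases hj : j = i₀
    · rw [hj]
      have := congrFun h' i₀
      simpa using this
    · have := congrFun h' j
      simpa [Function.update_of_ne hj] using this
  have hle : Nat.card {b : Fin m → Bool // subProd s b ∈ K} ≤
      Nat.card {b : Fin m → Bool // subProd s b ∉ K} :=
    Nat.card_le_card_of_injective f hinj
  have hsum : Nat.card {b : Fin m → Bool // subProd s b ∈ K} +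
      Nat.card {b : Fin m → Bool // subProd s b ∉ K} = 2 ^ m := by
    rw [Nat.card_eq_fintype_card, Nat.card_eq_fintype_card,
      Fintype.card_subtype_compl (fun b => subProd s b ∈ K)]
    have h1 : Fintype.card {b : Fin m → Bool // subProd s b ∈ K} ≤
        Fintype.card (Fin m → Bool) := Fintype.card_subtype_le _
    have h2 : Fintype.card (Fin m → Bool) = 2 ^ m := by simp
    omega
  omega

end aux

/-- If `G` is a finite group generated by `s₁,...,s_m`, `K < G` is a proper subgroup,
and `r₁,...,r_N` are independent uniformly random subproducts of `(s₁,...,s_m)`, then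
the probability that all of them lie in `K` is at most `2^{-N}`. -/
theorem stmt_14 {G : Type*} [Group G] [Finite G] {m : ℕ} (s : Fin m → G)
    (hgen : Subgroup.closure (Set.range s) = ⊤)
    (K : Subgroup G) (hK : K ≠ ⊤) (N : ℕ) :
    (Nat.card {b : Fin N → Fin m → Bool // ∀ j, subProd s (b j) ∈ K} : ℚ) / 2 ^ (N * m)
      ≤ 1 / 2 ^ N := by
  classical
  have hex : ∃ i, s i ∉ K := by
    by_contra h
    push_neg at h
    apply hK
    have : Subgroup.closure (Set.range s) ≤ K := by
      rw [Subgroup.closure_le]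
      rintro x ⟨i, rfl⟩
      exact h i
    rw [hgen] at this
    exact top_le_iff.1 this
  set c := Nat.card {b : Fin m → Bool // subProd s b ∈ K} with hc
  have hcle : 2 * c ≤ 2 ^ m := count_le s K hex
  -- card of the N-fold product
  have hcard : Nat.card {b : Fin N → Fin m → Bool // ∀ j, subProd s (b j) ∈ K} = c ^ N := by
    have e : {b : Fin N → Fin m → Bool // ∀ j, subProd s (b j) ∈ K} ≃
        (Fin N → {b : Fin m → Bool // subProd s b ∈ K}) :=
      Equiv.subtypePiEquivPi (p := fun _ b => subProd s b ∈ K)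
    rw [Nat.card_congr e, Nat.card_pi]
    simp [hc]
  rw [hcard]
  -- numeric conclusion
  have h2c : c * 2 ≤ 2 ^ m := by linarith
  have hnat : c ^ N * 2 ^ N ≤ 2 ^ (N * m) := by
    calc c ^ N * 2 ^ N = (c * 2) ^ N := (mul_pow c 2 N).symm
      _ ≤ (2 ^ m) ^ N := Nat.pow_le_pow_left h2c N
      _ = 2 ^ (N * m) := by rw [← pow_mul, mul_comm]
  rw [div_le_div_iff₀ (by positivity) (by positivity)]
  calc ((c ^ N : ℕ) : ℚ) * 2 ^ N = ((c ^ N * 2 ^ N : ℕ) : ℚ) := by push_cast; ring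
    _ ≤ ((2 ^ (N * m) : ℕ) : ℚ) := by exact_mod_cast hnat
    _ = 1 * 2 ^ (N * m) := by push_cast; ring
end
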